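/- Let q ≥ 3 be an integer and Γ_q the Hecke triangle group in SL(2,ℝ). Then every hyperbolic element of Γ_q is, up to sign, Γ_q-conjugate to a reduced element: for every g ∈ Γ_q with |tr g| > 2 there exist h ∈ Γ_q and ε ∈ {1, −1} such that g' := ε·h·g·h⁻¹ satisfies tr g' > 2, the lower-left entry of g' is nonzero, and w_a(g') > 0 > w_r(g'). -/

import Mathlib

noncomputable section

abbrev SL2 := Matrix.SpecialLinearGroup (Fin 2) ℝ

/-- `S = [[0,1],[−1,0]] ∈ SL(2,ℝ)`. -/
def Smat : SL2 := ⟨!![0, 1; -1, 0], by norm_num [Matrix.det_fin_two_of]⟩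

/-- `T_q = [[1, λ_q],[0,1]] ∈ SL(2,ℝ)` where `λ_q = 2cos(π/q)`. -/
def Tmat (q : ℕ) : SL2 :=
  ⟨!![1, 2 * Real.cos (Real.pi / q); 0, 1], by norm_num [Matrix.det_fin_two_of]⟩

/-- The Hecke triangle group `Γ_q ≤ SL(2,ℝ)`, generated by `S` and `T_q`. -/
def Hecke (q : ℕ) : Subgroup SL2 := Subgroup.closure {Smat, Tmat q}

/-- Trace of an element of `SL(2,ℝ)`. -/
def trc (g : SL2) : ℝ := g.1 0 0 + g.1 1 1

/-- `λ₊(g) = (tr g + √((tr g)² − 4))/2`. -/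
def lamP (g : SL2) : ℝ := (trc g + Real.sqrt ((trc g) ^ 2 - 4)) / 2

/-- `λ₋(g) = (tr g − √((tr g)² − 4))/2`. -/
def lamM (g : SL2) : ℝ := (trc g - Real.sqrt ((trc g) ^ 2 - 4)) / 2

/-- Attracting fixed point `w_a(g) = (λ₊(g) − d)/c` of a hyperbolic `g` with `c ≠ 0`. -/
def wA (g : SL2) : ℝ := (lamP g - g.1 1 1) / g.1 1 0

/-- Repelling fixed point `w_r(g) = (λ₋(g) − d)/c` of a hyperbolic `g` with `c ≠ 0`. -/
def wR (g : SL2) : ℝ := (lamM g - g.1 1 1) / g.1 1 0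

/-! Let `Γ ≤ SL(2,ℝ)` contain `S` and `τ(L) = [[1, L], [0, 1]]` with `0 < L < 2`, and let
`M = [[a, b], [c, d]] ∈ Γ` have trace `t > 2`. A matrix with `b, c > 0` is reduced, and
conjugating by `τ(s)` keeps `c` and turns `b` into `E(s)`, where
`4 c E(s) = t² - 4 - (2 c s - (d - a))²`. So once some `τ(s) ∈ Γ` makes that square smaller than
`t² - 4`, conjugating by `τ(s)` or by `S τ(s)` gives a reduced element; rounding to `s ∈ Lℤ`
makes it at most `c² L²`, which settles the case `c² L² < t² - 4`. Otherwise the conjugate by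
`S τ(s)` has lower-left entry `-E(s)` with `E(s)² ≤ (L⁴ / 16) c²`. Since `L⁴ / 16 < 1` while
`c² L² ≥ t² - 4 > 0` would have to persist, iterating this contraction reaches the first case,
unless some conjugate becomes upper triangular. But an upper-triangular hyperbolic
`[[α, *], [0, α⁻¹]] ∈ Γ` conjugates `τ(m)` into `τ(α² m)`, so then `Γ` contains arbitrarily
short translations, and rounding with one of those instead of `L` finishes the argument.
Elements of negative trace are handled through `-g = S² g`. -/

def tau (s : ℝ) : SL2 := ⟨!![1, s; 0, 1], by norm_num [Matrix.det_fin_two_of]⟩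

section Entries

open Matrix.SpecialLinearGroup
open Matrix (mul_apply vecMul adjugate_fin_two det_fin_two)

@[simp] lemma coe_tau (s : ℝ) : ((tau s : SL2) : Matrix (Fin 2) (Fin 2) ℝ) = !![1, s; 0, 1] := rfl

@[simp] lemma coe_Smat : ((Smat : SL2) : Matrix (Fin 2) (Fin 2) ℝ) = !![0, 1; -1, 0] := rfl

lemma tau_zero : tau 0 = 1 := by
  ext i j
  fin_cases i <;> fin_cases j <;> rfl

lemma tau_add (s t : ℝ) : tau (s + t) = tau s * tau t := by
  ext i j
  fin_cases i <;> fin_cases j <;> simp [coe_mul, mul_apply, add_comm]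

lemma tau_intCast_mul (n : ℤ) (s : ℝ) : tau (n * s) = tau s ^ n := by
  induction n using Int.induction_on with
  | zero => simp [tau_zero]
  | succ k ih => rw [zpow_add_one, ← ih, ← tau_add]; push_cast; ring_nf
  | pred k ih => rw [zpow_sub_one, ← ih, eq_mul_inv_iff_mul_eq, ← tau_add]; push_cast; ring_nf

lemma Smat_mul_self : Smat * Smat = -1 := by
  ext i j
  fin_cases i <;> fin_cases j <;> simp [coe_mul, mul_apply]

lemma det_entries (M : SL2) : M.1 0 0 * M.1 1 1 - M.1 0 1 * M.1 1 0 = 1 := by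
  rw [← det_fin_two, M.2]

lemma inv_apply_zero_zero (M : SL2) : (M⁻¹).1 0 0 = M.1 1 1 := by
  simp [coe_inv, adjugate_fin_two]

lemma inv_apply_one_zero (M : SL2) : (M⁻¹).1 1 0 = -M.1 1 0 := by
  simp [coe_inv, adjugate_fin_two]

lemma conj_tau_apply_one_zero (M : SL2) (s : ℝ) : (tau s * M * (tau s)⁻¹).1 1 0 = M.1 1 0 := by
  simp [coe_mul, coe_inv, adjugate_fin_two, mul_apply, vecMul, dotProduct]

lemma conj_tau_apply_zero_one (M : SL2) (s : ℝ) :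
    (tau s * M * (tau s)⁻¹).1 0 1 = M.1 0 1 + s * (M.1 1 1 - M.1 0 0) - s ^ 2 * M.1 1 0 := by
  simp only [coe_mul, coe_inv, adjugate_fin_two, coe_tau, mul_apply, Fin.sum_univ_two, Matrix.of_apply,
    Matrix.cons_val', Matrix.cons_val_zero, Matrix.cons_val_one, Matrix.cons_val_fin_one]
  ring

lemma conj_Smat_apply_one_zero (M : SL2) : (Smat * M * Smat⁻¹).1 1 0 = -M.1 0 1 := by
  simp [coe_mul, coe_inv, adjugate_fin_two, mul_apply, vecMul, dotProduct]

lemma conj_Smat_apply_zero_one (M : SL2) : (Smat * M * Smat⁻¹).1 0 1 = -M.1 1 0 := by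
  simp [coe_mul, coe_inv, adjugate_fin_two, mul_apply, vecMul, dotProduct]

lemma conj_tau_of_apply_one_zero_eq_zero {u : SL2} (hu : u.1 1 0 = 0) (m : ℝ) :
    u * tau m * u⁻¹ = tau (u.1 0 0 ^ 2 * m) := by
  have hdet := det_entries u
  rw [hu, mul_zero, sub_zero] at hdet
  rw [mul_inv_eq_iff_eq_mul]
  ext i j
  fin_cases i <;> fin_cases j <;>
    simp only [Fin.zero_eta, Fin.mk_one, Fin.isValue, coe_mul, coe_tau, mul_apply, Fin.sum_univ_two,
      Matrix.of_apply, Matrix.cons_val', Matrix.cons_val_zero, Matrix.cons_val_one,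
      Matrix.cons_val_fin_one, hu, mul_one, one_mul, mul_zero, zero_mul, add_zero, zero_add]
  linear_combination (-(u.1 0 0 * m)) * hdet

lemma trc_conj (h M : SL2) : trc (h * M * h⁻¹) = trc M := by
  have htrace (A : SL2) : trc A = Matrix.trace A.1 := (Matrix.trace_fin_two A.1).symm
  rw [htrace, htrace, coe_mul, coe_mul, Matrix.trace_mul_cycle, ← coe_mul, inv_mul_cancel,
    coe_one, Matrix.one_mul]

lemma trc_neg (M : SL2) : trc (-M) = -trc M := by
  simp only [trc, coe_neg, Matrix.neg_apply]
  ring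

end Entries

def IsReducedHyperbolic (M : SL2) : Prop :=
  trc M > 2 ∧ M.1 1 0 ≠ 0 ∧ wA M > 0 ∧ 0 > wR M

lemma isReducedHyperbolic_of_pos {M : SL2} (ht : 2 < trc M) (hb : 0 < M.1 0 1) (hc : 0 < M.1 1 0) :
    IsReducedHyperbolic M := by
  have hdet := det_entries M
  have htr : trc M = M.1 0 0 + M.1 1 1 := rfl
  have hD : 0 < trc M ^ 2 - 4 := by nlinarith
  have hr : Real.sqrt (trc M ^ 2 - 4) ^ 2 = trc M ^ 2 - 4 := Real.sq_sqrt hD.le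
  -- `d` lies strictly between the eigenvalues: `(d - λ₋)(d - λ₊) = 1 - a d = -b c < 0`
  have hprod : (M.1 1 1 - lamM M) * (M.1 1 1 - lamP M) = -(M.1 0 1 * M.1 1 0) := by
    simp only [lamM, lamP]
    linear_combination (-1 / 4 : ℝ) * hr - M.1 1 1 * htr - hdet
  have hlam : lamM M ≤ lamP M := by
    simp only [lamM, lamP]
    linarith [Real.sqrt_nonneg (trc M ^ 2 - 4)]
  have hneg : (M.1 1 1 - lamM M) * (M.1 1 1 - lamP M) < 0 := by
    rw [hprod]; linarith [mul_pos hb hc]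
  refine ⟨ht, hc.ne', div_pos ?_ hc, div_neg_of_neg_of_pos ?_ hc⟩ <;> nlinarith

lemma conj_mul_eq {G : Type*} [Group G] (a b x : G) :
    a * b * x * (a * b)⁻¹ = a * (b * x * b⁻¹) * a⁻¹ := by
  group

def HasReducedConj (G : Subgroup SL2) (M : SL2) : Prop :=
  ∃ h ∈ G, IsReducedHyperbolic (h * M * h⁻¹)

lemma HasReducedConj.of_conj {G : Subgroup SL2} {M w : SL2} (hw : w ∈ G)
    (h : HasReducedConj G (w * M * w⁻¹)) : HasReducedConj G M := by
  obtain ⟨h, hh, hred⟩ := h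
  refine ⟨h * w, mul_mem hh hw, ?_⟩
  rwa [conj_mul_eq]

lemma four_mul_conj_tau_apply_zero_one (M : SL2) (s : ℝ) :
    4 * M.1 1 0 * (tau s * M * (tau s)⁻¹).1 0 1 =
      trc M ^ 2 - 4 - (2 * M.1 1 0 * s - (M.1 1 1 - M.1 0 0)) ^ 2 := by
  rw [conj_tau_apply_zero_one, trc]
  linear_combination (-4 : ℝ) * det_entries M

lemma hasReducedConj_of_sq_lt {G : Subgroup SL2} {M : SL2} {s : ℝ} (hS : Smat ∈ G)
    (hs : tau s ∈ G) (ht : 2 < trc M)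
    (hsq : (2 * M.1 1 0 * s - (M.1 1 1 - M.1 0 0)) ^ 2 < trc M ^ 2 - 4) :
    HasReducedConj G M := by
  set M' := tau s * M * (tau s)⁻¹
  have hcb : 0 < M.1 1 0 * M'.1 0 1 := by
    have := four_mul_conj_tau_apply_zero_one M s
    nlinarith
  have ht' : 2 < trc M' := by rwa [trc_conj]
  rcases lt_or_gt_of_ne (left_ne_zero_of_mul hcb.ne') with hc | hc
  · refine ⟨Smat * tau s, mul_mem hS hs, ?_⟩
    rw [conj_mul_eq]
    apply isReducedHyperbolic_of_pos (by rwa [trc_conj])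
    · rw [conj_Smat_apply_zero_one, conj_tau_apply_one_zero]; linarith
    · rw [conj_Smat_apply_one_zero]; nlinarith
  · refine ⟨tau s, hs, isReducedHyperbolic_of_pos ht' ?_ (by rwa [conj_tau_apply_one_zero])⟩
    nlinarith

lemma exists_int_sq_le {c : ℝ} (x : ℝ) (hc : c ≠ 0) {μ : ℝ} (hμ : 0 < μ) :
    ∃ n : ℤ, (2 * c * (n * μ) - x) ^ 2 ≤ c ^ 2 * μ ^ 2 := by
  set y := x / (2 * c * μ)
  have hy : x = 2 * c * μ * y := (mul_div_cancel₀ x (by positivity : 2 * c * μ ≠ 0)).symm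
  have hround : (y - round y) ^ 2 ≤ (1 / 2) ^ 2 := sq_le_sq' (abs_le.1 (abs_sub_round y)).1
    (abs_le.1 (abs_sub_round y)).2
  refine ⟨round y, ?_⟩
  calc (2 * c * (round y * μ) - x) ^ 2 = 4 * c ^ 2 * μ ^ 2 * (y - round y) ^ 2 := by rw [hy]; ring
    _ ≤ 4 * c ^ 2 * μ ^ 2 * (1 / 2) ^ 2 := by gcongr
    _ = c ^ 2 * μ ^ 2 := by ring

lemma hasReducedConj_of_sq_mul_sq_lt {G : Subgroup SL2} {M : SL2} {μ : ℝ} (hS : Smat ∈ G)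
    (hμG : tau μ ∈ G) (hμ : 0 < μ) (ht : 2 < trc M) (hc : M.1 1 0 ≠ 0)
    (hsq : M.1 1 0 ^ 2 * μ ^ 2 < trc M ^ 2 - 4) : HasReducedConj G M := by
  obtain ⟨n, hn⟩ := exists_int_sq_le (M.1 1 1 - M.1 0 0) hc hμ
  refine hasReducedConj_of_sq_lt hS ?_ ht (hn.trans_lt hsq)
  rw [tau_intCast_mul]
  exact zpow_mem hμG n

lemma upperTriangular_diag_sq_lt_one {u : SL2} (hu : u.1 1 0 = 0) (ht : 2 < trc u) :
    u.1 0 0 ^ 2 < 1 ∨ u.1 1 1 ^ 2 < 1 := by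
  have hdet := det_entries u
  rw [hu, mul_zero, sub_zero] at hdet
  have htr : trc u = u.1 0 0 + u.1 1 1 := rfl
  by_contra! h
  nlinarith [mul_nonneg (sub_nonneg.2 h.1) (sub_nonneg.2 h.2)]

lemma tau_pow_mul_mem {G : Subgroup SL2} {u : SL2} {L : ℝ} (hT : tau L ∈ G) (hu : u ∈ G)
    (huc : u.1 1 0 = 0) (n : ℕ) : tau ((u.1 0 0 ^ 2) ^ n * L) ∈ G := by
  induction n with
  | zero => simpa using hT
  | succ n ih =>
    rw [pow_succ', mul_assoc, ← conj_tau_of_apply_one_zero_eq_zero huc]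
    exact mul_mem (mul_mem hu ih) (inv_mem hu)

lemma exists_tau_mem_of_upperTriangular {G : Subgroup SL2} {u : SL2} {L ε : ℝ}
    (hT : tau L ∈ G) (hL : 0 < L) (hu : u ∈ G) (huc : u.1 1 0 = 0) (htu : 2 < trc u)
    (hε : 0 < ε) : ∃ μ, 0 < μ ∧ μ < ε ∧ tau μ ∈ G := by
  obtain ⟨v, hv, hvc, hv1⟩ : ∃ v ∈ G, v.1 1 0 = 0 ∧ v.1 0 0 ^ 2 < 1 := by
    rcases upperTriangular_diag_sq_lt_one huc htu with h | h
    · exact ⟨u, hu, huc, h⟩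
    · exact ⟨u⁻¹, inv_mem hu, by rw [inv_apply_one_zero, huc, neg_zero],
        by rwa [inv_apply_zero_zero]⟩
  have hv0 : 0 < v.1 0 0 ^ 2 := by
    have hdet := det_entries v
    rw [hvc, mul_zero, sub_zero] at hdet
    exact sq_pos_of_ne_zero (left_ne_zero_of_mul_eq_one hdet)
  obtain ⟨n, hn⟩ := exists_pow_lt_of_lt_one (div_pos hε hL) hv1
  exact ⟨_, by positivity, (lt_div_iff₀ hL).1 hn, tau_pow_mul_mem hT hv hvc n⟩

lemma hasReducedConj_of_upperTriangular {G : Subgroup SL2} {M u : SL2} {L : ℝ} (hS : Smat ∈ G)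
    (hT : tau L ∈ G) (hL : 0 < L) (hu : u ∈ G) (huc : u.1 1 0 = 0) (htu : 2 < trc u)
    (ht : 2 < trc M) (hc : M.1 1 0 ≠ 0) : HasReducedConj G M := by
  have hD : 0 < trc M ^ 2 - 4 := by nlinarith
  obtain ⟨μ, hμ, hμε, hμG⟩ := exists_tau_mem_of_upperTriangular hT hL hu huc htu
    (div_pos (Real.sqrt_pos.2 hD) (abs_pos.2 hc))
  refine hasReducedConj_of_sq_mul_sq_lt hS hμG hμ ht hc ?_
  rw [lt_div_iff₀ (abs_pos.2 hc), Real.lt_sqrt (by positivity)] at hμε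
  simpa [mul_pow, mul_comm] using hμε

lemma exists_conj_apply_one_zero_ne_zero {G : Subgroup SL2} {M : SL2} {L : ℝ} (hS : Smat ∈ G)
    (hT : tau L ∈ G) (hL : L ≠ 0) (ht : 2 < trc M) : ∃ w ∈ G, (w * M * w⁻¹).1 1 0 ≠ 0 := by
  by_cases hc : M.1 1 0 = 0
  · by_cases hb : M.1 0 1 = 0
    · -- `M` is diagonal with distinct entries, so `τ(L) M τ(L)⁻¹` has nonzero upper-right entry
      refine ⟨Smat * tau L, mul_mem hS hT, ?_⟩
      have hdet := det_entries M
      have htr : trc M = M.1 0 0 + M.1 1 1 := rfl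
      rw [conj_mul_eq, conj_Smat_apply_one_zero, conj_tau_apply_zero_one, hb, hc]
      intro h
      have had : M.1 1 1 = M.1 0 0 := by
        have : L * (M.1 1 1 - M.1 0 0) = 0 := by linarith
        linarith [(mul_eq_zero.1 this).resolve_left hL]
      rw [hb, hc, had] at hdet
      nlinarith
    · exact ⟨Smat, hS, by rw [conj_Smat_apply_one_zero]; exact neg_ne_zero.2 hb⟩
  · exact ⟨1, one_mem G, by simpa using hc⟩

lemma exists_conj_apply_one_zero_sq_le {G : Subgroup SL2} {M : SL2} {L : ℝ} (hS : Smat ∈ G)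
    (hT : tau L ∈ G) (hL : 0 < L) (ht : 2 < trc M) (hc : M.1 1 0 ≠ 0)
    (hbig : trc M ^ 2 - 4 ≤ M.1 1 0 ^ 2 * L ^ 2) :
    ∃ w ∈ G, (w * M * w⁻¹).1 1 0 ^ 2 ≤ L ^ 4 / 16 * M.1 1 0 ^ 2 := by
  obtain ⟨n, hn⟩ := exists_int_sq_le (M.1 1 1 - M.1 0 0) hc hL
  have hs : tau (n * L) ∈ G := by rw [tau_intCast_mul]; exact zpow_mem hT n
  refine ⟨Smat * tau (n * L), mul_mem hS hs, ?_⟩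
  rw [conj_mul_eq, conj_Smat_apply_one_zero, neg_sq]
  have hD : 0 < trc M ^ 2 - 4 := by nlinarith
  have hE := four_mul_conj_tau_apply_zero_one M (n * L)
  set E := (tau (n * L) * M * (tau (n * L))⁻¹).1 0 1
  -- in `hE`, both `t² - 4` and the square subtracted from it lie in `[0, c² L²]` (by `hbig`, `hn`)
  have h16 : (4 * M.1 1 0 * E) ^ 2 ≤ (M.1 1 0 ^ 2 * L ^ 2) ^ 2 := by
    refine sq_le_sq' ?_ ?_ <;> nlinarith [sq_nonneg (2 * M.1 1 0 * (n * L) - (M.1 1 1 - M.1 0 0))]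
  have hc2 : 0 < 16 * M.1 1 0 ^ 2 := by positivity
  nlinarith

lemma hasReducedConj_of_forall_apply_one_zero_ne_zero {G : Subgroup SL2} {M : SL2} {L : ℝ}
    (hS : Smat ∈ G) (hT : tau L ∈ G) (hL : 0 < L) (hL2 : L < 2)
    (hG : ∀ u ∈ G, 2 < trc u → u.1 1 0 ≠ 0) (hM : M ∈ G) (ht : 2 < trc M) :
    HasReducedConj G M := by
  have hconj (w : SL2) (hw : w ∈ G) : w * M * w⁻¹ ∈ G ∧ 2 < trc (w * M * w⁻¹) :=
    ⟨mul_mem (mul_mem hw hM) (inv_mem hw), by rwa [trc_conj]⟩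
  by_contra hirr
  have hbig (w : SL2) (hw : w ∈ G) : trc M ^ 2 - 4 ≤ (w * M * w⁻¹).1 1 0 ^ 2 * L ^ 2 := by
    by_contra! hlt
    rw [← trc_conj w M] at hlt
    exact hirr ((hasReducedConj_of_sq_mul_sq_lt hS hT hL (hconj w hw).2
      (hG _ (hconj w hw).1 (hconj w hw).2) hlt).of_conj hw)
  have hdesc (n : ℕ) : ∃ w ∈ G, (w * M * w⁻¹).1 1 0 ^ 2 ≤ (L ^ 4 / 16) ^ n * M.1 1 0 ^ 2 := by
    induction n with
    | zero => exact ⟨1, one_mem G, by simp⟩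
    | succ n ih =>
      obtain ⟨w, hw, hwn⟩ := ih
      obtain ⟨v, hv, hvw⟩ := exists_conj_apply_one_zero_sq_le hS hT hL (hconj w hw).2
        (hG _ (hconj w hw).1 (hconj w hw).2) (by rw [trc_conj]; exact hbig w hw)
      refine ⟨v * w, mul_mem hv hw, ?_⟩
      rw [conj_mul_eq]
      calc _ ≤ L ^ 4 / 16 * (w * M * w⁻¹).1 1 0 ^ 2 := hvw
        _ ≤ L ^ 4 / 16 * ((L ^ 4 / 16) ^ n * M.1 1 0 ^ 2) := by gcongr
        _ = (L ^ 4 / 16) ^ (n + 1) * M.1 1 0 ^ 2 := by ring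
  have hc := hG M hM ht
  have hD : 0 < trc M ^ 2 - 4 := by nlinarith
  have hρ : L ^ 4 / 16 < 1 := by
    rw [div_lt_one (by norm_num)]
    calc L ^ 4 < 2 ^ 4 := by gcongr
      _ = 16 := by norm_num
  obtain ⟨n, hn⟩ := exists_pow_lt_of_lt_one
    (div_pos hD (by positivity : 0 < M.1 1 0 ^ 2 * L ^ 2)) hρ
  obtain ⟨w, hw, hwn⟩ := hdesc n
  rw [lt_div_iff₀ (by positivity)] at hn
  nlinarith [hbig w hw]

theorem hasReducedConj_of_two_lt_trc {G : Subgroup SL2} {M : SL2} {L : ℝ} (hS : Smat ∈ G)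
    (hT : tau L ∈ G) (hL : 0 < L) (hL2 : L < 2) (hM : M ∈ G) (ht : 2 < trc M) :
    HasReducedConj G M := by
  by_cases hG : ∃ u ∈ G, u.1 1 0 = 0 ∧ 2 < trc u
  · obtain ⟨u, hu, huc, htu⟩ := hG
    obtain ⟨w, hw, hc⟩ := exists_conj_apply_one_zero_ne_zero hS hT hL.ne' ht
    exact (hasReducedConj_of_upperTriangular hS hT hL hu huc htu
      (by rwa [trc_conj]) hc).of_conj hw
  · push Not at hG
    exact hasReducedConj_of_forall_apply_one_zero_ne_zero hS hT hL hL2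
      (fun u hu htu huc => (hG u hu huc).not_gt htu) hM ht

lemma two_cos_pi_div_mem_Ioo {q : ℕ} (hq : 3 ≤ q) :
    0 < 2 * Real.cos (Real.pi / q) ∧ 2 * Real.cos (Real.pi / q) < 2 := by
  have hq' : (3 : ℝ) ≤ q := by exact_mod_cast hq
  have hpos : 0 < Real.pi / q := by positivity
  have hle : Real.pi / q ≤ Real.pi / 3 := by gcongr
  have hcos_pos : 0 < Real.cos (Real.pi / q) :=
    Real.cos_pos_of_mem_Ioo ⟨by linarith, by linarith [Real.pi_pos]⟩
  have hcos_lt : Real.cos (Real.pi / q) < Real.cos 0 :=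
    Real.cos_lt_cos_of_nonneg_of_le_pi le_rfl (by linarith [Real.pi_pos]) hpos
  rw [Real.cos_zero] at hcos_lt
  constructor <;> linarith

/-- every hyperbolic element of `Γ_q` is, up to sign, `Γ_q`-conjugate to
a reduced element: for `g ∈ Γ_q` with `|tr g| > 2` there are `h ∈ Γ_q` and a sign such
that `g' = ±h·g·h⁻¹` satisfies `tr g' > 2`, has nonzero lower-left entry, and
`w_a(g') > 0 > w_r(g')`. -/
theorem stmt_14 (q : ℕ) (hq : 3 ≤ q) (g : SL2) (hg : g ∈ Hecke q)
    (hhyp : |trc g| > 2) :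
    ∃ h ∈ Hecke q, ∃ g' : SL2,
      (g' = h * g * h⁻¹ ∨ g' = -(h * g * h⁻¹)) ∧
      trc g' > 2 ∧ g'.1 1 0 ≠ 0 ∧ wA g' > 0 ∧ 0 > wR g' := by
  obtain ⟨hL, hL2⟩ := two_cos_pi_div_mem_Ioo hq
  have hS : Smat ∈ Hecke q := Subgroup.subset_closure (Set.mem_insert _ _)
  have hT : tau (2 * Real.cos (Real.pi / q)) ∈ Hecke q :=
    Subgroup.subset_closure (Set.mem_insert_of_mem _ rfl)
  rcases le_or_gt 0 (trc g) with hg0 | hg0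
  · obtain ⟨h, hh, hred⟩ := hasReducedConj_of_two_lt_trc hS hT hL hL2 hg
      (by rwa [abs_of_nonneg hg0] at hhyp)
    exact ⟨h, hh, _, Or.inl rfl, hred⟩
  · have hng : -g ∈ Hecke q := by
      rw [← neg_one_mul, ← Smat_mul_self]
      exact mul_mem (mul_mem hS hS) hg
    obtain ⟨h, hh, hred⟩ := hasReducedConj_of_two_lt_trc hS hT hL hL2 hng
      (by rw [trc_neg]; rw [abs_of_neg hg0] at hhyp; exact hhyp)
    exact ⟨h, hh, _, Or.inr (by rw [mul_neg, neg_mul]), hred⟩
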